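/- If k = (1, ..., 1, 2) (n-1 ones followed by a 2), then B_k(m) = Σ_{i=1}^{m} i^n and b_k(m) = Σ_{i=1}^{m-1} i^n for all positive integers m. -/

import Mathlib

/-!
For `k = (1, …, 1, 2)` the multiset is `{1, …, n-1, n, n}`. Everything between the two copies of
the largest letter `n` of a Stirling permutation must be `≥ n`, so the two copies are adjacent, and
merging them is a descent-preserving bijection onto the permutations of `{1, …, n}`. Hence
`A_{k,i}` is the Eulerian number `⟨n, i-1⟩`. Its recurrence comes from inserting the largest
letter into a permutation with `d` descents: this creates a new descent unless the letter goes
into one of the `d` descents or at the end, so `d + 1` of the gaps keep `d` and the others give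
`d + 1`.

After reindexing, `B_k(m) = ∑ⱼ ⟨n, j⟩ C(m+n-j, n+1)`. Pascal's rule turns each step `m → m+1`
into Worpitzky's identity `(m+1)^n = ∑ⱼ ⟨n, j⟩ C(m+n-j, n)`, so `B_k(m) = ∑_{i ≤ m} i^n`. The
polynomial `b_k` uses the reversed coefficients, and the symmetry `⟨n, j⟩ = ⟨n, n-1-j⟩` gives
`b_k(m) = B_k(m-1)`.
-/

open Finset

/-- The multiset {1^{k 0}, 2^{k 1}, ..., n^{k (n-1)}}. -/
def multisetOf (k : ℕ → ℕ) (n : ℕ) : Multiset ℕ :=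
  ∑ i ∈ Finset.range n, Multiset.replicate (k i) (i + 1)

/-- A word is a Stirling permutation: between two equal letters, all letters are ≥. -/
def IsStirlingPerm (w : List ℕ) : Prop :=
  ∀ i s j : ℕ, i < s → s < j → j < w.length →
    w.getD i 0 = w.getD j 0 → w.getD i 0 ≤ w.getD s 0

/-- Number of descents of a word: indices i (0-based, i < K-1) with w i > w (i+1),
together with the last index. -/
def descents (w : List ℕ) : ℕ :=
  ((Finset.range (w.length - 1)).filter fun i => w.getD (i + 1) 0 < w.getD i 0).card + 1

/-- Eulerian numbers A_{k,i}: number of Stirling permutations of {1^{k_1},...,n^{k_n}}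
with exactly i descents. -/
noncomputable def eulerianA (k : ℕ → ℕ) (n i : ℕ) : ℕ :=
  Nat.card {w : List ℕ //
    (↑w : Multiset ℕ) = multisetOf k n ∧ IsStirlingPerm w ∧ descents w = i}

/-- K = k_1 + ... + k_n. -/
def bigK (k : ℕ → ℕ) (n : ℕ) : ℕ := ∑ i ∈ Finset.range n, k i

/-- B_k(m): the coefficient of x^m in (∑_{i=1}^n A_{k,i} x^i)/(1-x)^{K+1}. -/
noncomputable def Bpoly (k : ℕ → ℕ) (n m : ℕ) : ℕ :=
  ∑ i ∈ Finset.Icc 1 n, eulerianA k n i * Nat.choose (bigK k n + m - i) (bigK k n)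

/-- b_k(m): the coefficient of x^m in (∑_{i=K-n+1}^{K} A_{k,K+1-i} x^i)/(1-x)^{K+1}. -/
noncomputable def bpoly (k : ℕ → ℕ) (n m : ℕ) : ℕ :=
  ∑ i ∈ Finset.Icc (bigK k n - n + 1) (bigK k n),
    eulerianA k n (bigK k n + 1 - i) * Nat.choose (bigK k n + m - i) (bigK k n)

namespace List

theorem exists_eq_append_cons_append_cons_of_two_le_count {α : Type*} [DecidableEq α] {a : α}
    {l : List α} (h : 2 ≤ l.count a) : ∃ A B C, l = A ++ a :: (B ++ a :: C) := by
  obtain ⟨r₁, r₂, rfl, h₁, h₂⟩ := cons_sublist_iff.mp (replicate_sublist_iff.mpr h)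
  obtain ⟨A, B₁, rfl⟩ := append_of_mem h₁
  obtain ⟨B₂, C, rfl⟩ := append_of_mem (singleton_sublist.mp h₂)
  exact ⟨A, B₁ ++ B₂, C, by simp⟩

theorem append_cons_inj_of_notMem_left {α : Type*} [DecidableEq α] {x : α} {A A' C C' : List α}
    (hA : x ∉ A) (hA' : x ∉ A') : A ++ x :: C = A' ++ x :: C' ↔ A = A' ∧ C = C' := by
  refine ⟨fun h => ?_, by rintro ⟨rfl, rfl⟩; rfl⟩
  have hlen : A.length = A'.length := by
    simpa [idxOf_append_of_notMem hA, idxOf_append_of_notMem hA'] using congrArg (idxOf x) h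
  simpa using append_inj h hlen

theorem permutations'Aux_eq_map_insertIdx {α : Type*} (x : α) (u : List α) :
    permutations'Aux x u = (range (u.length + 1)).map fun p => u.insertIdx p x :=
  ext_getElem (by simp) fun i _ _ => by simp [getElem_permutations'Aux]

theorem sum_map_ite_eq_mul_countP {α : Type*} (l : List α) (P : α → Prop) [DecidablePred P]
    (c : ℕ) : (l.map fun u => if P u then c else 0).sum = c * l.countP (P ·) := by
  simp [sum_map_ite, countP_eq_length_filter, mul_comm]

end List

def eulerian : ℕ → ℕ → ℕ
  | _, 0 => 1
  | 0, _ + 1 => 0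
  | n + 1, j + 1 => (j + 2) * eulerian n (j + 1) + (n - j) * eulerian n j

@[simp] theorem eulerian_zero_right (n : ℕ) : eulerian n 0 = 1 := by cases n <;> rfl

theorem eulerian_succ_succ (n j : ℕ) :
    eulerian (n + 1) (j + 1) = (j + 2) * eulerian n (j + 1) + (n - j) * eulerian n j := rfl

theorem eulerian_eq_zero_of_le {n j : ℕ} (hnj : n ≤ j) (hj : j ≠ 0) : eulerian n j = 0 := by
  induction n generalizing j with
  | zero => obtain ⟨j, rfl⟩ := Nat.exists_eq_succ_of_ne_zero hj; rfl
  | succ n ih =>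
    obtain ⟨j, rfl⟩ := Nat.exists_eq_succ_of_ne_zero hj
    rw [eulerian_succ_succ, ih (by omega) (by omega), Nat.sub_eq_zero_of_le (by omega)]
    simp

theorem eulerian_succ_self (n : ℕ) : eulerian (n + 1) n = 1 := by
  induction n with
  | zero => rfl
  | succ n ih => rw [eulerian_succ_succ, ih, eulerian_eq_zero_of_le le_rfl n.succ_ne_zero]; simp

theorem eulerian_symm {n i j : ℕ} (h : i + j + 1 = n) : eulerian n i = eulerian n j := by
  induction n generalizing i j with
  | zero => omega
  | succ n ih =>
    rcases i with _ | i <;> rcases j with _ | j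
    · rfl
    · rw [show j + 1 = n by omega, eulerian_succ_self, eulerian_zero_right]
    · rw [show i + 1 = n by omega, eulerian_succ_self, eulerian_zero_right]
    · rw [eulerian_succ_succ, eulerian_succ_succ, ih (i := i + 1) (j := j) (by omega),
        ih (i := i) (j := j + 1) (by omega), show n - i = j + 2 by omega,
        show n - j = i + 2 by omega]
      ring

theorem sum_range_add_two_eulerian_mul (n : ℕ) (f : ℕ → ℕ) :
    ∑ j ∈ range (n + 2), eulerian (n + 1) j * f j =
      ∑ j ∈ range (n + 1), eulerian (n + 1) j * f j := by
  rw [sum_range_succ, eulerian_eq_zero_of_le le_rfl n.succ_ne_zero, zero_mul, add_zero]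

theorem add_one_mul_choose_eq (m j c : ℕ) :
    (m + 1) * (m + c).choose (j + c) =
      (j + 1) * (m + c + 1).choose (j + c + 1) + c * (m + c).choose (j + c + 1) := by
  have hrec := Nat.choose_succ_right_eq (m + c) (j + c)
  rw [Nat.choose_succ_succ']
  rcases le_or_gt j m with hjm | hmj
  · obtain ⟨d, rfl⟩ := Nat.exists_eq_add_of_le hjm
    rw [show j + d + c - (j + c) = d by omega] at hrec
    linarith
  · rw [Nat.choose_eq_zero_of_lt (by omega : m + c < j + c),
      Nat.choose_eq_zero_of_lt (by omega : m + c < j + c + 1)]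
    ring

theorem worpitzky (n m : ℕ) :
    (m + 1) ^ n = ∑ j ∈ range (n + 1), eulerian n j * (m + n - j).choose n := by
  induction n with
  | zero => simp
  | succ n ih =>
    have hstep : ∀ j ∈ range (n + 1), eulerian n j * ((m + 1) * (m + n - j).choose n) =
        (j + 1) * eulerian n j * (m + n + 1 - j).choose (n + 1) +
          (n - j) * eulerian n j * (m + n - j).choose (n + 1) := fun j hj => by
      have := add_one_mul_choose_eq m j (n - j)
      rw [show m + (n - j) = m + n - j by grind, show j + (n - j) = n by grind,
        show m + n - j + 1 = m + n + 1 - j by grind] at this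
      rw [this]; ring
    have hshift : ∑ j ∈ range (n + 1), (j + 1) * eulerian n j * (m + n + 1 - j).choose (n + 1) =
        ∑ j ∈ range (n + 1), (j + 2) * eulerian n (j + 1) * (m + n - j).choose (n + 1) +
          (m + n + 1).choose (n + 1) := by
      have hlast : eulerian n (n + 1) = 0 := eulerian_eq_zero_of_le n.le_succ n.succ_ne_zero
      calc _ = ∑ j ∈ range (n + 2), (j + 1) * eulerian n j * (m + n + 1 - j).choose (n + 1) := by
            rw [sum_range_succ _ (n + 1), hlast]; simp
        _ = _ := by rw [sum_range_succ']; simp [Nat.add_sub_add_right]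
    calc (m + 1) ^ (n + 1)
        = ∑ j ∈ range (n + 1), eulerian n j * ((m + 1) * (m + n - j).choose n) := by
          rw [pow_succ, ih, sum_mul]; exact sum_congr rfl fun j _ => by ring
      _ = ∑ j ∈ range (n + 1), (j + 1) * eulerian n j * (m + n + 1 - j).choose (n + 1) +
            ∑ j ∈ range (n + 1), (n - j) * eulerian n j * (m + n - j).choose (n + 1) := by
          rw [sum_congr rfl hstep, sum_add_distrib]
      _ = ∑ j ∈ range (n + 1), eulerian (n + 1) (j + 1) * (m + n - j).choose (n + 1) +
            (m + n + 1).choose (n + 1) := by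
          rw [hshift, add_right_comm, ← sum_add_distrib]
          exact congrArg (· + _) (sum_congr rfl fun j _ => by rw [eulerian_succ_succ]; ring)
      _ = ∑ j ∈ range (n + 1 + 1), eulerian (n + 1) j * (m + (n + 1) - j).choose (n + 1) := by
          rw [sum_range_succ' (fun j => eulerian (n + 1) j * (m + (n + 1) - j).choose (n + 1))]
          simp [← add_assoc]

theorem sum_eulerian_mul_choose (n m : ℕ) :
    ∑ j ∈ range (n + 1), eulerian n j * (m + n - j).choose (n + 1) = ∑ i ∈ Icc 1 m, i ^ n := by
  induction m with
  | zero =>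
    refine sum_eq_zero fun j hj => ?_
    rw [Nat.choose_eq_zero_of_lt (by omega), mul_zero]
  | succ m ih =>
    have hpascal : ∀ j ∈ range (n + 1), eulerian n j * (m + 1 + n - j).choose (n + 1) =
        eulerian n j * (m + n - j).choose (n + 1) + eulerian n j * (m + n - j).choose n :=
      fun j hj => by
        rw [show m + 1 + n - j = m + n - j + 1 by grind, Nat.choose_succ_succ', mul_add, add_comm]
    rw [sum_congr rfl hpascal, sum_add_distrib, ih, ← worpitzky, sum_Icc_succ_top (by omega)]

def numDescents : List ℕ → ℕ
  | a :: b :: l => numDescents (b :: l) + if b < a then 1 else 0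
  | _ => 0

@[simp] theorem numDescents_nil : numDescents [] = 0 := rfl

@[simp] theorem numDescents_singleton (a : ℕ) : numDescents [a] = 0 := rfl

@[simp] theorem numDescents_cons_cons (a b : ℕ) (l : List ℕ) :
    numDescents (a :: b :: l) = numDescents (b :: l) + if b < a then 1 else 0 := rfl

theorem numDescents_eq_countP (u : List ℕ) :
    numDescents u = (List.range (u.length - 1)).countP fun i => u.getD (i + 1) 0 < u.getD i 0 := by
  induction u with
  | nil => rfl
  | cons a t ih =>
    cases t with
    | nil => rfl
    | cons b l =>
      rw [numDescents_cons_cons, ih]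
      simp only [List.length_cons, Nat.add_sub_cancel, List.range_succ_eq_map, List.countP_cons,
        List.countP_map]
      simp [Function.comp_def]

theorem descents_eq_numDescents_add_one (w : List ℕ) : descents w = numDescents w + 1 := by
  rw [descents, numDescents_eq_countP, List.countP_eq_length_filter]
  rfl

theorem numDescents_append_cons_cons (A B : List ℕ) (x : ℕ) :
    numDescents (A ++ x :: x :: B) = numDescents (A ++ x :: B) := by
  induction A with
  | nil => simp
  | cons a A ih =>
    cases A with
    | nil => simp
    | cons a' A => simpa using ih

/-- Gap `p` of `u` lies between positions `p - 1` and `p`; the final gap `p = u.length` counts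
as a descent gap, as the final position does in `descents`. -/
def IsDescentGap (u : List ℕ) (p : ℕ) : Prop :=
  p = u.length ∨ (0 < p ∧ u.getD p 0 < u.getD (p - 1) 0)

instance (u : List ℕ) : DecidablePred (IsDescentGap u) := fun _ => by
  unfold IsDescentGap; infer_instance

theorem numDescents_insertIdx {x : ℕ} {u : List ℕ} (hu : ∀ a ∈ u, a < x) {p : ℕ}
    (hp : p ≤ u.length) :
    numDescents (u.insertIdx p x) = numDescents u + if IsDescentGap u p then 0 else 1 := by
  unfold IsDescentGap
  induction u generalizing p with
  | nil => simp_all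
  | cons a t ih =>
    have hax := hu a (by simp)
    rcases p with _ | q
    · simp [hax]
    have ih' := ih (fun b hb => hu b (by simp [hb])) (p := q) (by simpa using hp)
    rw [List.insertIdx_succ_cons]
    rcases q with _ | q
    · cases t <;> simp_all <;> (try split_ifs) <;> omega
    · rcases t with _ | ⟨b, t⟩
      · simp at hp
      · simp_all; split_ifs <;> omega

theorem countP_isDescentGap_range (u : List ℕ) :
    (List.range (u.length + 1)).countP (IsDescentGap u ·) = numDescents u + 1 := by
  rw [List.range_succ, List.countP_append, numDescents_eq_countP]
  simp only [IsDescentGap, List.countP_singleton, true_or, decide_true, if_true,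
    Nat.add_right_cancel_iff]
  rw [List.countP_congr (q := fun p => 0 < p ∧ u.getD p 0 < u.getD (p - 1) 0)
    (fun p hp => by simp at hp; simp [hp.ne])]
  rcases u.length with _ | n
  · rfl
  · simp [List.range_succ_eq_map, List.countP_map, Function.comp_def]

theorem countP_numDescents_permutations'Aux {x : ℕ} {u : List ℕ} (hu : ∀ a ∈ u, a < x) (j : ℕ) :
    (u.permutations'Aux x).countP (fun v => numDescents v = j) =
      if numDescents u = j then j + 1
      else if numDescents u + 1 = j then u.length + 1 - j else 0 := by
  have hgaps := countP_isDescentGap_range u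
  have htotal :=
    List.length_eq_countP_add_countP (IsDescentGap u ·) (l := List.range (u.length + 1))
  rw [List.length_range, hgaps] at htotal
  rw [List.permutations'Aux_eq_map_insertIdx, List.countP_map,
    List.countP_congr (q := fun p => numDescents u + (if IsDescentGap u p then 0 else 1) = j)
      fun p hp => by
        simp only [Function.comp_apply, decide_eq_true_eq,
          numDescents_insertIdx hu (Nat.lt_succ_iff.mp (List.mem_range.mp hp))]]
  split_ifs with h1 h2
  · rw [← h1, ← hgaps]
    exact List.countP_congr fun p _ => by by_cases hs : IsDescentGap u p <;> simp [hs]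
  · have : (List.range (u.length + 1)).countP
          (fun p => numDescents u + (if IsDescentGap u p then 0 else 1) = j) =
        (List.range (u.length + 1)).countP (fun p => ¬ IsDescentGap u p) :=
      List.countP_congr fun p _ => by by_cases hs : IsDescentGap u p <;> simp [hs] <;> omega
    simp only [decide_eq_true_eq] at htotal
    omega
  · exact List.countP_eq_zero.mpr fun p _ => by split_ifs <;> simp <;> omega

theorem countP_numDescents_permutations' {L : List ℕ} (hL : L.Pairwise (· > ·)) (j : ℕ) :
    L.permutations'.countP (fun v => numDescents v = j) = eulerian L.length j := by
  induction hL generalizing j with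
  | nil => cases j <;> rfl
  | @cons x L hx hL ih =>
    have hsummand : ∀ u ∈ L.permutations',
        ((List.countP (numDescents · = j)) ∘ List.permutations'Aux x) u =
          if numDescents u = j then j + 1
          else if numDescents u + 1 = j then L.length + 1 - j else 0 := fun u hu => by
      have hu := List.mem_permutations'.mp hu
      rw [Function.comp_apply, hu.length_eq.symm,
        countP_numDescents_permutations'Aux fun a ha => hx a (hu.subset ha)]
    rw [List.permutations', List.countP_flatMap, List.map_congr_left hsummand]
    cases j with
    | zero => simpa [List.sum_map_ite_eq_mul_countP] using ih 0
    | succ j =>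
      have hsplit : ∀ u ∈ L.permutations',
          (if numDescents u = j + 1 then j + 1 + 1
            else if numDescents u + 1 = j + 1 then L.length + 1 - (j + 1) else 0) =
          (if numDescents u = j + 1 then j + 2 else 0) +
            (if numDescents u = j then L.length - j else 0) := fun u _ => by
        split_ifs <;> omega
      rw [List.map_congr_left hsplit, List.sum_map_add, List.sum_map_ite_eq_mul_countP,
        List.sum_map_ite_eq_mul_countP, ih, ih, List.length_cons, eulerian_succ_succ]

theorem card_perm_numDescents_eq_eulerian {L : List ℕ} (hL : L.Pairwise (· > ·)) (j : ℕ) :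
    Nat.card {v : List ℕ // v.Perm L ∧ numDescents v = j} = eulerian L.length j := by
  have hnodup : L.permutations'.Nodup :=
    (List.permutations_perm_permutations' L).nodup_iff.mp (List.nodup_permutations L hL.nodup)
  rw [← countP_numDescents_permutations' hL, List.countP_eq_length_filter,
    ← List.toFinset_card_of_nodup (hnodup.filter _), ← Nat.card_eq_finsetCard]
  exact Nat.card_congr (Equiv.subtypeEquivRight fun v => by simp [List.mem_permutations'])

theorem isStirlingPerm_iff {w : List ℕ} :
    IsStirlingPerm w ↔ ∀ P M S c, w = P ++ c :: (M ++ c :: S) → ∀ b ∈ M, c ≤ b := by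
  constructor
  · rintro hw P M S c rfl b hb
    obtain ⟨t, ht, rfl⟩ := List.getElem_of_mem hb
    have := hw P.length (P.length + (t + 1)) (P.length + (M.length + 1)) (by omega) (by omega)
      (by simp)
    simpa [List.getD_eq_getElem?_getD, List.getElem?_append_right, List.getElem?_append_left, ht]
      using this
  · intro h i s j his hsj hj heq
    have hsplit : w = w.take i ++ w[i] ::
        ((w.drop (i + 1)).take (j - i - 1) ++ w[j] :: w.drop (j + 1)) := by
      refine List.ext_getElem (by simp; omega) fun k _ _ => ?_
      simp only [List.getElem_append, List.getElem_cons]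
      grind
    simp only [List.getD_eq_getElem?_getD, List.getElem?_eq_getElem (show i < w.length by omega),
      List.getElem?_eq_getElem (show s < w.length by omega), List.getElem?_eq_getElem hj,
      Option.getD_some] at heq ⊢
    rw [heq] at hsplit ⊢
    exact h _ _ _ _ hsplit _ (by grind)

section Stirling

variable {x : ℕ} {L w : List ℕ}

theorem count_eq_two_of_perm_cons_cons (hxL : x ∉ L) (hw : w.Perm (x :: x :: L)) :
    w.count x = 2 := by
  simp [hw.count_eq, List.count_eq_zero.mpr hxL]

theorem count_le_one_of_perm_cons_cons (hL : L.Nodup) {c : ℕ} (hc : c ≠ x)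
    (hw : w.Perm (x :: x :: L)) : w.count c ≤ 1 := by
  simpa [hw.count_eq, List.count_cons, hc.symm] using List.nodup_iff_count_le_one.mp hL c

theorem exists_eq_append_cons_cons_of_isStirlingPerm (hx : ∀ a ∈ L, a < x)
    (hw : w.Perm (x :: x :: L)) (hS : IsStirlingPerm w) :
    ∃ A C, w = A ++ x :: x :: C ∧ x ∉ A := by
  have hcount := count_eq_two_of_perm_cons_cons (fun h => (hx x h).false) hw
  obtain ⟨A, B, C, rfl⟩ := List.exists_eq_append_cons_append_cons_of_two_le_count hcount.ge
  simp only [List.count_append, List.count_cons_self] at hcount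
  have hA : x ∉ A := List.count_eq_zero.mp (by omega)
  have hB : x ∉ B := List.count_eq_zero.mp (by omega)
  obtain rfl : B = [] := List.eq_nil_iff_forall_not_mem.mpr fun b hb => by
    have hbx : b ≠ x := fun h => hB (h ▸ hb)
    have hbL : b ∈ x :: x :: L := hw.subset (by simp [hb])
    have := hx b (by simpa [hbx] using hbL)
    have := isStirlingPerm_iff.mp hS A B C x rfl b hb
    omega
  exact ⟨A, C, by simp, hA⟩

theorem isStirlingPerm_append_cons_cons (hL : L.Nodup) (hxL : x ∉ L) {A C : List ℕ}
    (hw : (A ++ x :: x :: C).Perm (x :: x :: L)) : IsStirlingPerm (A ++ x :: x :: C) := by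
  refine isStirlingPerm_iff.mpr fun P M S c hsplit b hb => ?_
  have hcount := count_eq_two_of_perm_cons_cons hxL hw
  have hA : x ∉ A := by
    simp only [List.count_append, List.count_cons_self] at hcount
    exact List.count_eq_zero.mp (by omega)
  obtain rfl : c = x := by
    by_contra hcx
    have := count_le_one_of_perm_cons_cons hL hcx hw
    rw [hsplit] at this
    simp [List.count_append] at this
    omega
  rw [hsplit] at hcount
  simp only [List.count_append, List.count_cons_self] at hcount
  have hP : c ∉ P := List.count_eq_zero.mp (by omega)
  have hM : c ∉ M := List.count_eq_zero.mp (by omega)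
  obtain ⟨-, hMC⟩ := (List.append_cons_inj_of_notMem_left hA hP).mp hsplit
  cases M with
  | nil => simp at hb
  | cons m M => exact (hM (by simp [(List.cons.inj hMC).1])).elim

theorem card_stirlingPerm_eq_card_perm (hL : L.Nodup) (hx : ∀ a ∈ L, a < x) (j : ℕ) :
    Nat.card {w : List ℕ // w.Perm (x :: x :: L) ∧ IsStirlingPerm w ∧ numDescents w = j} =
      Nat.card {v : List ℕ // v.Perm (x :: L) ∧ numDescents v = j} := by
  have hxL : x ∉ L := fun h => (hx x h).false
  have herase : ∀ {A C : List ℕ}, x ∉ A → (A ++ x :: x :: C).erase x = A ++ x :: C := fun hA => by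
    rw [List.erase_append_right _ hA, List.erase_cons_head]
  refine Nat.card_congr (Equiv.ofBijective (fun w => ⟨w.1.erase x, ?_⟩) ⟨?_, ?_⟩)
  · obtain ⟨w, hw, hS, hj⟩ := w
    obtain ⟨A, C, rfl, hA⟩ := exists_eq_append_cons_cons_of_isStirlingPerm hx hw hS
    refine ⟨by simpa using hw.erase x, ?_⟩
    rw [herase hA, ← numDescents_append_cons_cons, hj]
  · intro ⟨w, hw, hS, _⟩ ⟨w', hw', hS', _⟩ h
    simp only [Subtype.mk.injEq] at h ⊢
    obtain ⟨A, C, rfl, hA⟩ := exists_eq_append_cons_cons_of_isStirlingPerm hx hw hS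
    obtain ⟨A', C', rfl, hA'⟩ := exists_eq_append_cons_cons_of_isStirlingPerm hx hw' hS'
    rw [herase hA, herase hA'] at h
    obtain ⟨rfl, rfl⟩ := (List.append_cons_inj_of_notMem_left hA hA').mp h
    rfl
  · rintro ⟨v, hv, hj⟩
    obtain ⟨A, C, rfl⟩ := List.append_of_mem (hv.symm.subset List.mem_cons_self)
    have hA : x ∉ A := by
      have := hv.count_eq x
      simp [List.count_append, List.count_eq_zero.mpr hxL] at this
      exact List.count_eq_zero.mp (by omega)
    have hw : (A ++ x :: x :: C).Perm (x :: x :: L) := List.perm_middle.trans (hv.cons x)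
    refine ⟨⟨A ++ x :: x :: C, hw, isStirlingPerm_append_cons_cons hL hxL hw,
      by rwa [numDescents_append_cons_cons]⟩, ?_⟩
    simp [herase hA]

end Stirling

theorem multisetOf_eq (n : ℕ) : multisetOf (fun i => if i = n then 2 else 1) (n + 1) =
    ↑((n + 1) :: (n + 1) :: ((List.range n).map (· + 1)).reverse) := by
  have hsingle : ∀ i ∈ range n,
      Multiset.replicate (if i = n then 2 else 1) (i + 1) = {i + 1} := fun i hi => by
    rw [if_neg (by simp at hi; omega), Multiset.replicate_one]
  have hsum : ∑ i ∈ range n, ({i + 1} : Multiset ℕ) = ↑((List.range n).map (· + 1)) := by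
    rw [← Multiset.map_coe, ← Multiset.range, ← Multiset.sum_map_singleton (Multiset.map _ _),
      Multiset.map_map]
    rfl
  rw [multisetOf, sum_range_succ, sum_congr rfl hsingle, if_pos rfl, hsum]
  simp [add_comm]

theorem bigK_eq (n : ℕ) : bigK (fun i => if i = n then 2 else 1) (n + 1) = n + 2 := by
  rw [bigK, sum_range_succ, if_pos rfl, sum_congr rfl fun i hi => if_neg (by simp at hi; omega)]
  simp

theorem eulerianA_eq_eulerian (n j : ℕ) :
    eulerianA (fun i => if i = n then 2 else 1) (n + 1) (j + 1) = eulerian (n + 1) j := by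
  set L := ((List.range n).map (· + 1)).reverse
  have hL : ((n + 1) :: L).Pairwise (· > ·) := by
    simp [L, List.pairwise_reverse, List.pairwise_map, List.pairwise_lt_range]
  calc eulerianA (fun i => if i = n then 2 else 1) (n + 1) (j + 1)
      = Nat.card {w // w.Perm ((n + 1) :: (n + 1) :: L) ∧ IsStirlingPerm w ∧
          numDescents w = j} := by
        simp only [eulerianA, multisetOf_eq, Multiset.coe_eq_coe, descents_eq_numDescents_add_one,
          Nat.add_right_cancel_iff, L]
    _ = Nat.card {v // v.Perm ((n + 1) :: L) ∧ numDescents v = j} :=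
        card_stirlingPerm_eq_card_perm (List.pairwise_cons.mp hL).2.nodup
          (List.pairwise_cons.mp hL).1 j
    _ = eulerian (n + 1) j := by rw [card_perm_numDescents_eq_eulerian hL]; simp [L]

theorem Bpoly_eq (n m : ℕ) : Bpoly (fun i => if i = n then 2 else 1) (n + 1) m =
    ∑ j ∈ range (n + 2), eulerian (n + 1) j * (m + (n + 1) - j).choose (n + 2) := by
  rw [Bpoly, bigK_eq, sum_range_add_two_eulerian_mul, ← Ico_add_one_right_eq_Icc,
    sum_Ico_eq_sum_range]
  refine sum_congr (by simp) fun j hj => ?_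
  rw [add_comm 1 j, eulerianA_eq_eulerian]
  grind

theorem bpoly_eq (n m : ℕ) (hm : 1 ≤ m) : bpoly (fun i => if i = n then 2 else 1) (n + 1) m =
    ∑ j ∈ range (n + 2), eulerian (n + 1) j * (m - 1 + (n + 1) - j).choose (n + 2) := by
  rw [bpoly, bigK_eq, sum_range_add_two_eulerian_mul, ← Ico_add_one_right_eq_Icc,
    sum_Ico_eq_sum_range]
  refine sum_congr (by simp) fun j hj => ?_
  rw [mem_range] at hj
  rw [show n + 2 + 1 - (n + 2 - (n + 1) + 1 + j) = n - j + 1 by omega, eulerianA_eq_eulerian,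
    eulerian_symm (show n - j + j + 1 = n + 1 by omega)]
  grind

/-- For k = (1,...,1,2) (n-1 ones followed by a 2), B_k(m) = ∑_{i=1}^m i^n and
b_k(m) = ∑_{i=1}^{m-1} i^n. -/
theorem Bpoly_bpoly_power_sums (n m : ℕ) (hn : 1 ≤ n) (hm : 1 ≤ m) :
    Bpoly (fun i => if i = n - 1 then 2 else 1) n m = ∑ i ∈ Finset.Icc 1 m, i ^ n ∧
    bpoly (fun i => if i = n - 1 then 2 else 1) n m = ∑ i ∈ Finset.Icc 1 (m - 1), i ^ n := by
  obtain ⟨n, rfl⟩ := Nat.exists_eq_add_of_le' hn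
  rw [Nat.add_sub_cancel, Bpoly_eq, bpoly_eq n m hm]
  exact ⟨sum_eulerian_mul_choose _ _, sum_eulerian_mul_choose _ _⟩
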